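/- arXiv:math-ph/0409082 — 2 statements merged into one kernel-verified Lean document; each statement's English description precedes it below -/
import Mathlib

section
/- Let Q be the infinite symmetric tridiagonal (Jacobi) matrix with diagonal entries Q_{nn} = β_n and off-diagonal entries Q_{n,n-1} = Q_{n-1,n} = γ_n. Fix n and k with n > k. Then the polynomial expression for [Q^k]_{n,n-1} in the variables {γ_j, β_j} is invariant under the substitution σ₀: γ_j ↦ γ_{2n-j}, β_j ↦ β_{2n-j-1}. -/
open Finset

/-- Entry of the semi-infinite Jacobi matrix `Q` with `Q_{nn} = β_n`,
`Q_{n,n-1} = Q_{n-1,n} = γ_n`. -/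
def jacobiEntry (γ β : ℕ → ℝ) (i j : ℕ) : ℝ :=
  if i = j then β i else if i = j + 1 then γ i else if j = i + 1 then γ j else 0

/-- Entries of the `k`-th power of the Jacobi matrix (the cutoff `range (i+k+2)`
captures all nonzero terms since the matrix is tridiagonal). -/
def jacobiPow (γ β : ℕ → ℝ) : ℕ → ℕ → ℕ → ℝ
  | 0, i, j => if i = j then 1 else 0
  | k + 1, i, j =>
      ∑ m ∈ Finset.range (i + k + 2), jacobiEntry γ β i m * jacobiPow γ β k m j

lemma jacobiEntry_symm (γ β : ℕ → ℝ) (i j : ℕ) :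
    jacobiEntry γ β i j = jacobiEntry γ β j i := by
  unfold jacobiEntry
  split_ifs <;> first | rfl | omega | (subst_vars; rfl)

lemma jacobiEntry_zero_of_gt (γ β : ℕ → ℝ) {i m : ℕ} (h : i + 1 < m) :
    jacobiEntry γ β i m = 0 := by
  unfold jacobiEntry
  split_ifs <;> first | rfl | omega

lemma jacobiPow_eq_pow (γ β : ℕ → ℝ) (N : ℕ) :
    ∀ (k i j : ℕ) (hi : i + k < N) (hj : j < N),
    jacobiPow γ β k i j =
      ((Matrix.of fun a b : Fin N => jacobiEntry γ β a b) ^ k) ⟨i, by omega⟩ ⟨j, hj⟩ := by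
  intro k
  induction k with
  | zero =>
    intro i j hi hj
    simp [jacobiPow, Matrix.one_apply, Fin.ext_iff]
  | succ k ih =>
    intro i j hi hj
    rw [jacobiPow, pow_succ', Matrix.mul_apply]
    have hstep : ∀ m : Fin N,
        (Matrix.of fun a b : Fin N => jacobiEntry γ β a b) ⟨i, by omega⟩ m *
          ((Matrix.of fun a b : Fin N => jacobiEntry γ β a b) ^ k) m ⟨j, hj⟩
        = jacobiEntry γ β i m * jacobiPow γ β k m j := by
      intro m
      by_cases hm : (m : ℕ) ≤ i + 1
      · have hm' : (m : ℕ) + k < N := by omega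
        rw [ih m j hm' hj]
        simp
      · rw [jacobiEntry_zero_of_gt γ β (by omega)]
        simp [Matrix.of_apply, jacobiEntry_zero_of_gt γ β (show i + 1 < (m:ℕ) by omega)]
    rw [Finset.sum_congr rfl (fun m _ => hstep m)]
    rw [Fin.sum_univ_eq_sum_range (fun m => jacobiEntry γ β i m * jacobiPow γ β k m j) N]
    -- both sums equal sum over range (i+2)
    rw [← Finset.sum_subset (Finset.range_subset_range.2 (show i + 2 ≤ i + k + 2 by omega))
        (fun x _ hx => by
          rw [jacobiEntry_zero_of_gt γ β (show i + 1 < x by simp at hx; omega), zero_mul]),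
        ← Finset.sum_subset (Finset.range_subset_range.2 (show i + 2 ≤ N by omega))
        (fun x _ hx => by
          rw [jacobiEntry_zero_of_gt γ β (show i + 1 < x by simp at hx; omega), zero_mul])]

lemma pow_submatrix {N : ℕ} (M : Matrix (Fin N) (Fin N) ℝ) (e : Equiv.Perm (Fin N)) (k : ℕ) :
    (M.submatrix e e) ^ k = (M ^ k).submatrix e e := by
  induction k with
  | zero => simp
  | succ k ih => rw [pow_succ, pow_succ, ih, Matrix.submatrix_mul_equiv]

lemma entry_reflect (γ β : ℕ → ℝ) (n a b : ℕ) (ha : a < 2*n) (hb : b < 2*n) :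
    jacobiEntry (fun j => γ (2*n - j)) (fun j => β (2*n - j - 1)) a b
      = jacobiEntry γ β (2*n - (a+1)) (2*n - (b+1)) := by
  unfold jacobiEntry
  split_ifs <;> first | omega | rfl | (congr 1 <;> omega)

/-- Invariance of `[Q^k]_{n,n-1}` under the substitution
`σ₀ : γ_j ↦ γ_{2n-j}, β_j ↦ β_{2n-j-1}`, provided `k < n`. -/
theorem jacobiPow_subdiag_invariant (γ β : ℕ → ℝ) (n k : ℕ) (hk : k < n) :
    jacobiPow γ β k n (n - 1) =
      jacobiPow (fun j => γ (2 * n - j)) (fun j => β (2 * n - j - 1)) k n (n - 1) := by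
  have hn : 0 < n := by omega
  set M : Matrix (Fin (2*n)) (Fin (2*n)) ℝ :=
    Matrix.of fun a b : Fin (2*n) => jacobiEntry γ β a b with hM
  set M' : Matrix (Fin (2*n)) (Fin (2*n)) ℝ :=
    Matrix.of fun a b : Fin (2*n) =>
      jacobiEntry (fun j => γ (2 * n - j)) (fun j => β (2 * n - j - 1)) a b with hM'
  have h1 : n + k < 2*n := by omega
  have h2 : n - 1 < 2*n := by omega
  rw [jacobiPow_eq_pow γ β (2*n) k n (n-1) h1 h2,
      jacobiPow_eq_pow _ _ (2*n) k n (n-1) h1 h2, ← hM, ← hM']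
  -- M' = M.submatrix rev rev
  have hrefl : M' = M.submatrix Fin.revPerm Fin.revPerm := by
    ext a b
    simp only [hM, hM', Matrix.submatrix_apply, Matrix.of_apply, Fin.revPerm_apply,
      Fin.val_rev]
    exact entry_reflect γ β n a b a.isLt b.isLt
  have hsymm : Matrix.transpose (M ^ k) = M ^ k := by
    rw [Matrix.transpose_pow]
    congr 1
    ext a b
    simp only [hM, Matrix.transpose_apply, Matrix.of_apply]
    exact jacobiEntry_symm γ β b a
  rw [show (M' : Matrix (Fin (2*n)) (Fin (2*n)) ℝ) = M.submatrix Fin.revPerm Fin.revPerm from hrefl,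
      pow_submatrix]
  simp only [Matrix.submatrix_apply, Fin.revPerm_apply]
  have hrev1 : (Fin.rev (⟨n, by omega⟩ : Fin (2*n))) = ⟨n - 1, h2⟩ := by
    ext; simp [Fin.val_rev]; omega
  have hrev2 : (Fin.rev (⟨n - 1, h2⟩ : Fin (2*n))) = ⟨n, by omega⟩ := by
    ext; simp [Fin.val_rev]; omega
  rw [hrev1, hrev2]
  conv_lhs => rw [← hsymm]
  rfl
end

section
/- Let Q be the infinite symmetric tridiagonal matrix with Q_{nn} = β_n and Q_{n,n-1} = Q_{n-1,n} = γ_n. Fix n and k with n > k. Then the polynomial expression for [Q^k]_{nn} in {γ_j, β_j} is invariant under the substitution σ₁: γ_{n+j} ↦ γ_{n-j+1}, β_{n+j} ↦ β_{n-j}, for j ∈ ℤ. -/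
open Finset

lemma jacobiEntry_eq_zero (γ β : ℕ → ℝ) {i m : ℕ} (h1 : m ≠ i - 1) (h2 : m ≠ i)
    (h3 : m ≠ i + 1) : jacobiEntry γ β i m = 0 := by
  unfold jacobiEntry
  rw [if_neg, if_neg, if_neg] <;> omega

lemma tri_sum (N a : ℕ) (ha : 1 ≤ a) (haN : a + 1 < N) (f : ℕ → ℝ)
    (h0 : ∀ m, m ≠ a - 1 → m ≠ a → m ≠ a + 1 → f m = 0) :
    ∑ m ∈ Finset.range N, f m = f (a - 1) + f a + f (a + 1) := by
  have hsub : ({a - 1, a, a + 1} : Finset ℕ) ⊆ Finset.range N := by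
    intro x hx; simp only [Finset.mem_insert, Finset.mem_singleton] at hx
    simp only [Finset.mem_range]; omega
  rw [← Finset.sum_subset hsub (by
    intro x _ hx'
    simp only [Finset.mem_insert, Finset.mem_singleton, not_or] at hx'
    exact h0 x hx'.1 hx'.2.1 hx'.2.2)]
  rw [Finset.sum_insert (by simp only [Finset.mem_insert, Finset.mem_singleton]; omega), Finset.sum_insert (by simp only [Finset.mem_singleton]; omega),
    Finset.sum_singleton]
  ring

lemma entryEq (γ β : ℕ → ℝ) (n : ℕ) {i j : ℕ} (hi : i ≤ 2 * n) (hj : j ≤ 2 * n) :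
    jacobiEntry (fun m => γ (2 * n + 1 - m)) (fun m => β (2 * n - m)) i j
      = jacobiEntry γ β (2 * n - i) (2 * n - j) := by
  simp only [jacobiEntry]
  split_ifs <;> first | rfl | omega | (congr 1; omega)

lemma key (γ β : ℕ → ℝ) (n : ℕ) : ∀ k i j, k < i → k < j → i + k ≤ 2 * n → j + k ≤ 2 * n →
    jacobiPow (fun m => γ (2 * n + 1 - m)) (fun m => β (2 * n - m)) k i j
      = jacobiPow γ β k (2 * n - i) (2 * n - j) := by
  intro k
  induction k with
  | zero =>
    intro i j hi hj hi2 hj2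
    simp only [jacobiPow]
    have h : i = j ↔ 2 * n - i = 2 * n - j := by omega
    by_cases h1 : i = j
    · rw [if_pos h1, if_pos (h.mp h1)]
    · rw [if_neg h1, if_neg (fun hh => h1 (h.mpr hh))]
  | succ k ih =>
    intro i j hi hj hi2 hj2
    simp only [jacobiPow]
    rw [tri_sum (i + k + 2) i (by omega) (by omega) _ (by
      intro m h1 h2 h3
      rw [jacobiEntry_eq_zero _ _ h1 h2 h3, zero_mul])]
    rw [tri_sum (2 * n - i + k + 2) (2 * n - i) (by omega) (by omega) _ (by
      intro m h1 h2 h3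
      rw [jacobiEntry_eq_zero _ _ h1 h2 h3, zero_mul])]
    have e1 : 2 * n - i - 1 = 2 * n - (i + 1) := by omega
    have e2 : 2 * n - i + 1 = 2 * n - (i - 1) := by omega
    rw [e1, e2,
      entryEq γ β n (by omega : i ≤ 2*n) (by omega : i - 1 ≤ 2*n),
      entryEq γ β n (by omega : i ≤ 2*n) (by omega : i ≤ 2*n),
      entryEq γ β n (by omega : i ≤ 2*n) (by omega : i + 1 ≤ 2*n),
      ih (i - 1) j (by omega) (by omega) (by omega) (by omega),
      ih i j (by omega) (by omega) (by omega) (by omega),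
      ih (i + 1) j (by omega) (by omega) (by omega) (by omega)]
    ring

/-- Invariance of `[Q^k]_{nn}` under the substitution
`σ₁ : γ_{n+j} ↦ γ_{n-j+1}, β_{n+j} ↦ β_{n-j}` (i.e. `γ_m ↦ γ_{2n+1-m}`,
`β_m ↦ β_{2n-m}`), provided `k < n`. -/
theorem jacobiPow_diag_invariant (γ β : ℕ → ℝ) (n k : ℕ) (hk : k < n) :
    jacobiPow γ β k n n =
      jacobiPow (fun m => γ (2 * n + 1 - m)) (fun m => β (2 * n - m)) k n n := by
  have := key γ β n k n n hk hk (by omega) (by omega)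
  rw [this]
  congr 1 <;> omega
end
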